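/- arXiv:2006.16233 — 4 statements merged into one kernel-verified Lean document; each statement's English description precedes it below -/
import Mathlib

section
/- Define the shift operator on vectors of naturals by ◁(q₁,…,q_k) = (q₁+q₂, q₂+q₃, …, q_{k-1}+q_k, q_k). Then the function Φ defined recursively by Φ(0, q⃗) = 0 and Φ(n+1, q⃗) = q₁ + Φ(n, ◁(q⃗)) satisfies Φ(n, q⃗) = ∑_{i=1}^{k} q_i · C(n, i) for all n. -/
/-- The shift operator `◁` on annotation vectors (represented as functions `ℕ → ℕ`
indexed from 1, vanishing above `k`): `(◁ q) i = q i + q (i+1)`. -/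
def shiftOp (q : ℕ → ℕ) : ℕ → ℕ := fun i => q i + q (i + 1)

/-- `Φ(0, q⃗) = 0` and `Φ(n+1, q⃗) = q₁ + Φ(n, ◁(q⃗))`. -/
def Phi : ℕ → (ℕ → ℕ) → ℕ
  | 0, _ => 0
  | n + 1, q => q 1 + Phi n (shiftOp q)

lemma phi_aux (k n : ℕ) : ∀ q : ℕ → ℕ, (∀ j, k < j → q j = 0) →
    Phi n q = ∑ i ∈ Finset.range k, q (i + 1) * n.choose (i + 1) := by
  induction n with
  | zero => intro q hq; simp [Phi]
  | succ n ih =>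
    intro q hq
    have hq' : ∀ j, k < j → shiftOp q j = 0 := by
      intro j hj
      simp [shiftOp, hq j hj, hq (j+1) (Nat.lt_succ_of_lt hj)]
    have : Phi (n+1) q = q 1 + Phi n (shiftOp q) := rfl
    rw [this, ih (shiftOp q) hq']
    simp only [shiftOp, add_mul, Finset.sum_add_distrib, Nat.choose_succ_succ', mul_add]
    -- goal: q 1 + (∑ q(i+1)C(n,i+1) + ∑ q(i+2)C(n,i+1))
    --     = ∑ q(i+1)C(n,i) + ∑ q(i+1)C(n,i+1)
    have key : q 1 + ∑ i ∈ Finset.range k, q (i + 1 + 1) * n.choose (i + 1)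
        = ∑ i ∈ Finset.range k, q (i + 1) * n.choose i := by
      cases k with
      | zero => simp [hq 1 (by norm_num)]
      | succ m =>
        rw [Finset.sum_range_succ' (fun i => q (i+1) * n.choose i) m,
            Finset.sum_range_succ]
        simp [add_comm]
        exact Or.inl (hq _ (by omega))
    omega
  
/-- `Φ(n, q⃗) = ∑_{i=1}^{k} q i * C(n, i)` for all `n`. -/
theorem phi_eq_binomial_sum (k : ℕ) (q : ℕ → ℕ) (hq : ∀ j, k < j → q j = 0) (n : ℕ) :
    Phi n q = ∑ i ∈ Finset.Icc 1 k, q i * n.choose i := by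
  rw [phi_aux k n q hq, show Finset.Icc 1 k = Finset.Ico 1 (k+1) by rfl,
      Finset.sum_Ico_eq_sum_range]
  simp [add_comm 1]
end

section
/- Let θ = (θ₁,…,θ_k) be a vector where θ_i : ℕⁱ → ℕ, and define the dependent shift ◁(y)(θ) = (θ₁', …, θ_k') where θ_i'(x) = θ_i(x) + θ_{i+1}(y, x) for i < k and θ_k' = θ_k. Define Φ([], θ) = 0 and Φ(v::vs, θ) = θ₁(v) + Φ(vs, ◁(v)(θ)). Then for a list ℓ = [v₁,…,v_n], Φ(ℓ, θ) = ∑_{i=1}^{k} ∑_{1 ≤ j₁ < ⋯ < j_i ≤ n} θ_i(v_{j₁},…,v_{j_i}). -/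
/-- The dependent shift operator: `(◁(y)(θ))_i (x⃗) = θ_i (x⃗) + θ_{i+1} (y, x⃗)`.
Here `θ i` takes its `i`-tuple of arguments as a list. -/
def dshift (y : ℕ) (θ : ℕ → List ℕ → ℕ) : ℕ → List ℕ → ℕ :=
  fun i xs => θ i xs + θ (i + 1) (y :: xs)

/-- `Φ([], θ) = 0` and `Φ(v::vs, θ) = θ₁(v) + Φ(vs, ◁(v)(θ))`. -/
def PhiD : List ℕ → (ℕ → List ℕ → ℕ) → ℕ
  | [], _ => 0
  | v :: vs, θ => θ 1 [v] + PhiD vs (dshift v θ)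

lemma phiD_aux (ℓ : List ℕ) : ∀ θ : ℕ → List ℕ → ℕ,
    θ 0 [] + PhiD ℓ θ = (ℓ.sublists.map (fun s => θ s.length s)).sum := by
  induction ℓ with
  | nil => intro θ; simp [PhiD]
  | cons v vs ih =>
    intro θ
    have hperm := (List.sublists_cons_perm_append v vs).map (fun s => θ s.length s)
    rw [hperm.sum_eq]
    have h := ih (dshift v θ)
    simp only [dshift] at h
    simp only [PhiD, List.map_append, List.sum_append, List.map_map]
    rw [← add_assoc, h, List.sum_map_add]
    simp [Function.comp_def]

lemma bucket_split (L : List (List ℕ)) (f : ℕ → List ℕ → ℕ) (N : ℕ)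
    (h : ∀ s ∈ L, s.length ≤ N) :
    (L.map (fun s => f s.length s)).sum
      = ∑ i ∈ Finset.range (N + 1),
          ((L.filter (fun s => s.length == i)).map (f i)).sum := by
  induction L with
  | nil => simp
  | cons s L ih =>
    have hs : s.length ∈ Finset.range (N + 1) := by
      simp [Nat.lt_succ_iff, h s (by simp)]
    have ihL := ih (fun t ht => h t (by simp [ht]))
    simp only [List.map_cons, List.sum_cons, ihL, List.filter_cons]
    have key : ∀ x ∈ Finset.range (N + 1),
        (List.map (f x) (if (s.length == x) = true
            then s :: List.filter (fun s => s.length == x) L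
            else List.filter (fun s => s.length == x) L)).sum
          = (if s.length = x then f x s else 0)
            + (List.map (f x) (List.filter (fun s => s.length == x) L)).sum := by
      intro x _; by_cases hx : s.length = x <;> simp [hx]
    rw [Finset.sum_congr rfl key, Finset.sum_add_distrib, Finset.sum_ite_eq]
    simp [hs]

lemma filter_len_zero (ℓ : List ℕ) :
    ℓ.sublists.filter (fun s => s.length == 0) = [[]] := by
  induction ℓ with
  | nil => simp
  | cons v vs ih =>
    have hperm := (List.sublists_cons_perm_append v vs).filter (fun s => s.length == 0)
    have : (List.filter (fun s => s.length == 0)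
        (vs.sublists ++ List.map (List.cons v) vs.sublists)) = [[]] := by
      rw [List.filter_append, ih]
      simp
    rw [this] at hperm
    exact List.Perm.eq_singleton hperm

/-- for a list `ℓ = [v₁,…,v_n]`,
`Φ(ℓ, θ) = ∑_{i=1}^{k} ∑_{1 ≤ j₁ < ⋯ < j_i ≤ n} θ_i(v_{j₁},…,v_{j_i})`; the inner sum
over strictly increasing index tuples is the sum over length-`i` subsequences of `ℓ`. -/
theorem phiD_eq_tuple_sum (k : ℕ) (θ : ℕ → List ℕ → ℕ)
    (hθ : ∀ i, k < i → ∀ xs, θ i xs = 0) (ℓ : List ℕ) :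
    PhiD ℓ θ = ∑ i ∈ Finset.Icc 1 k,
      ((ℓ.sublists.filter (fun s => s.length == i)).map (θ i)).sum := by
  set N := max k ℓ.length with hN
  set b : ℕ → ℕ := fun i => ((ℓ.sublists.filter (fun s => s.length == i)).map (θ i)).sum
    with hb
  have hlen : ∀ s ∈ ℓ.sublists, s.length ≤ N := fun s hs =>
    le_trans ((List.mem_sublists.mp hs).length_le) (le_max_right _ _)
  have h1 : θ 0 [] + PhiD ℓ θ = ∑ i ∈ Finset.range (N + 1), b i := by
    rw [phiD_aux ℓ θ, bucket_split ℓ.sublists θ N hlen]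
  have hb0 : b 0 = θ 0 [] := by simp [hb, filter_len_zero]
  have hzero : ∀ i ∈ Finset.range N, i ∉ Finset.range k → b (i + 1) = 0 := by
    intro i _ hik
    simp only [Finset.mem_range, not_lt] at hik
    apply List.sum_eq_zero
    intro x hx
    obtain ⟨s, _, rfl⟩ := List.mem_map.mp hx
    exact hθ _ (Nat.lt_succ_of_le hik) _
  have h2 : ∑ i ∈ Finset.range (N + 1), b i = θ 0 [] + ∑ i ∈ Finset.Icc 1 k, b i := by
    rw [Finset.sum_range_succ']
    rw [hb0, add_comm]
    congr 1
    rw [← Finset.sum_subset (Finset.range_subset_range.mpr (le_max_left k ℓ.length)) hzero]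
    rw [show Finset.Icc 1 k = Finset.Ico 1 (k + 1) by rfl, Finset.sum_Ico_eq_sum_range]
    simp [add_comm]
  have h3 := h1.trans h2
  have hgoal : PhiD ℓ θ = ∑ i ∈ Finset.Icc 1 k, b i := by omega
  exact hgoal
end

section
/- For the quadratic dependent annotation θ₂(x₁,x₂) = if x₁ > x₂ then 1 else 0 and θ₁(x) = 0, the potential Φ(ℓ, θ) of a natural-number list ℓ = [v₁,…,v_n] (defined by the dependent shift recursion) equals the number of out-of-order pairs in ℓ, i.e., the number of index pairs (i,j) with i < j and v_i > v_j. -/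
/-- Dependent-shift recursion for a pair of annotations `(θ₁, θ₂)`:
`Φ([], (θ₁,θ₂)) = 0` and `Φ(v::vs, (θ₁,θ₂)) = θ₁(v) + Φ(vs, (λx. θ₁(x) + θ₂(v,x), θ₂))`. -/
def Phi2 : List ℕ → (ℕ → ℕ) → (ℕ → ℕ → ℕ) → ℕ
  | [], _, _ => 0
  | v :: vs, θ1, θ2 => θ1 v + Phi2 vs (fun x => θ1 x + θ2 v x) θ2

lemma phi2_eq_sums : ∀ (ℓ : List ℕ) (θ1 : ℕ → ℕ) (θ2 : ℕ → ℕ → ℕ),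
    Phi2 ℓ θ1 θ2 = (∑ i ∈ Finset.range ℓ.length, θ1 (ℓ.getD i 0)) +
      ∑ i ∈ Finset.range ℓ.length, ∑ j ∈ Finset.range ℓ.length,
        (if i < j then θ2 (ℓ.getD i 0) (ℓ.getD j 0) else 0)
  | [], θ1, θ2 => by simp [Phi2]
  | v :: vs, θ1, θ2 => by
      rw [Phi2, phi2_eq_sums vs (fun x => θ1 x + θ2 v x) θ2]
      simp only [List.length_cons]
      rw [Finset.sum_range_succ' (fun i => θ1 ((v :: vs).getD i 0)),
        Finset.sum_range_succ' (fun i => ∑ j ∈ Finset.range (vs.length + 1),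
          (if i < j then θ2 ((v :: vs).getD i 0) ((v :: vs).getD j 0) else 0))]
      have h1 : ∀ i, ∑ j ∈ Finset.range (vs.length + 1),
          (if i + 1 < j then θ2 (vs.getD i 0) ((v :: vs).getD j 0) else 0)
          = ∑ j ∈ Finset.range vs.length,
            (if i < j then θ2 (vs.getD i 0) (vs.getD j 0) else 0) := by
        intro i
        rw [Finset.sum_range_succ']
        simp
      have h2 : ∑ j ∈ Finset.range (vs.length + 1),
          (if 0 < j then θ2 v ((v :: vs).getD j 0) else 0)
          = ∑ j ∈ Finset.range vs.length, θ2 v (vs.getD j 0) := by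
        rw [Finset.sum_range_succ']
        simp
      simp only [h1, h2, List.getD_cons_succ, List.getD_cons_zero,
        Finset.sum_add_distrib]
      omega

/-- with `θ₁(x) = 0` and `θ₂(x₁,x₂) = if x₁ > x₂ then 1 else 0`, the
potential of `ℓ = [v₁,…,v_n]` equals the number of out-of-order pairs of `ℓ`,
i.e. the number of index pairs `(i, j)` with `i < j` and `v_i > v_j`. -/
theorem phi2_counts_inversions (ℓ : List ℕ) :
    Phi2 ℓ (fun _ => 0) (fun x₁ x₂ => if x₁ > x₂ then 1 else 0) =
      ((Finset.range ℓ.length ×ˢ Finset.range ℓ.length).filter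
        (fun p => p.1 < p.2 ∧ ℓ.getD p.1 0 > ℓ.getD p.2 0)).card := by
  rw [phi2_eq_sums, Finset.card_filter, Finset.sum_product]
  simp [ite_and]
end

section
/- For insertion sort on a list ℓ of length n, the total number of recursive calls (one per sort recursion plus those of each insert into an already-sorted list) is at most n + inv(ℓ), where inv(ℓ) is the number of pairs (i, j) with i < j and ℓ_i > ℓ_j. -/
/-- Insertion into a list, recursing while the head is less than the inserted value. -/
def insertS (y : ℕ) : List ℕ → List ℕ
  | [] => [y]
  | h :: t => if h < y then h :: insertS y t else y :: h :: t

/-- Number of recursive calls (ticks) of `insert`. -/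
def insertCost (y : ℕ) : List ℕ → ℕ
  | [] => 0
  | h :: t => if h < y then 1 + insertCost y t else 0

/-- Insertion sort: `sort([]) = []`, `sort(h::t) = insert(h, sort(t))`. -/
def sortS : List ℕ → List ℕ
  | [] => []
  | h :: t => insertS h (sortS t)

/-- Total tick count: one tick per sort recursion on a nonempty list plus the ticks
of each insert into the already-sorted tail. -/
def sortCost : List ℕ → ℕ
  | [] => 0
  | h :: t => 1 + insertCost h (sortS t) + sortCost t

/-- Number of inversions: pairs `(i, j)` with `i < j` and `ℓ_i > ℓ_j`. -/
def inversions : List ℕ → ℕ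
  | [] => 0
  | a :: t => t.countP (fun b => decide (a > b)) + inversions t

lemma insertS_perm (y : ℕ) (s : List ℕ) : (insertS y s).Perm (y :: s) := by
  induction s with
  | nil => simp [insertS]
  | cons h t ih =>
    simp only [insertS]
    split
    · exact (ih.cons h).trans (List.Perm.swap _ _ _)
    · rfl

lemma sortS_perm (ℓ : List ℕ) : (sortS ℓ).Perm ℓ := by
  induction ℓ with
  | nil => rfl
  | cons h t ih =>
    exact (insertS_perm h (sortS t)).trans (ih.cons h)

lemma insertCost_le (y : ℕ) (s : List ℕ) :
    insertCost y s ≤ s.countP (fun b => decide (y > b)) := by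
  induction s with
  | nil => simp [insertCost]
  | cons h t ih =>
    simp only [insertCost, List.countP_cons]
    split
    · rename_i hlt
      rw [if_pos (by simpa [gt_iff_lt] using hlt)]
      omega
    · omega

/-- insertion sort's total tick count is at most `n + inv(ℓ)`. -/
theorem insertion_sort_cost_le (ℓ : List ℕ) :
    sortCost ℓ ≤ ℓ.length + inversions ℓ := by
  induction ℓ with
  | nil => simp [sortCost, inversions]
  | cons h t ih =>
    have h1 : insertCost h (sortS t) ≤ t.countP (fun b => decide (h > b)) := by
      calc insertCost h (sortS t) ≤ (sortS t).countP (fun b => decide (h > b)) :=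
            insertCost_le h (sortS t)
        _ = t.countP (fun b => decide (h > b)) := (sortS_perm t).countP_eq _
    simp only [sortCost, inversions, List.length_cons]
    omega
end
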